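/- Let G=(A,B,E) be a bipartite graph and let W1 and W2 be two disjoint nonempty sets of pendant blocks of G with M(W1 ∪ W2) > 0. Then there exist w1 ∈ W1 and w2 ∈ W2 that form a legal pair and satisfy M(W1 ∪ W2 − {w1, w2}) = M(W1 ∪ W2) − 1. -/

import Mathlib

open SimpleGraph

namespace AugBic

noncomputable section

variable {V : Type*}

/-- Two vertices are biconnected: they are in the same connected component and remain so
after the removal of any single edge or any single vertex other than either of them. -/
def BiconnPair (G : SimpleGraph V) (u v : V) : Prop :=
  G.Reachable u v ∧
  (∀ e ∈ G.edgeSet, (G.deleteEdges {e}).Reachable u v) ∧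
  (∀ w : V, ∀ hu : u ≠ w, ∀ hv : v ≠ w,
    (G.induce {x | x ≠ w}).Reachable ⟨u, hu⟩ ⟨v, hv⟩)

/-- A set of vertices is biconnected if every pair of its vertices is biconnected. -/
def BiconnSet (G : SimpleGraph V) (S : Set V) : Prop :=
  ∀ u ∈ S, ∀ v ∈ S, BiconnPair G u v

/-- A block: (the induced subgraph on) a maximal biconnected set of vertices. -/
def IsBlock (G : SimpleGraph V) (S : Set V) : Prop :=
  S.Nonempty ∧ BiconnSet G S ∧ ∀ T : Set V, S ⊆ T → BiconnSet G T → T = S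

/-- A cut vertex: its removal increases the number of connected components. -/
def IsCutVertex (G : SimpleGraph V) (v : V) : Prop :=
  Nat.card G.ConnectedComponent <
    Nat.card ((G.induce {x | x ≠ v}).ConnectedComponent)

/-- A cut edge: its removal increases the number of connected components. -/
def IsCutEdge (G : SimpleGraph V) (e : Sym2 V) : Prop :=
  e ∈ G.edgeSet ∧
    Nat.card G.ConnectedComponent <
      Nat.card ((G.deleteEdges {e}).ConnectedComponent)

/-- A pendant block: a singular block consisting of a vertex of degree 1, or a
nonsingular block containing exactly one cut vertex. -/
def IsPendantBlock (G : SimpleGraph V) (S : Set V) : Prop :=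
  IsBlock G S ∧
    ((∃ v, S = {v} ∧ (G.neighborSet v).ncard = 1) ∨
     (1 < S.ncard ∧ ∃! v, v ∈ S ∧ IsCutVertex G v))

/-- Λ(G): the set of pendant blocks of `G`. -/
def pendantBlocks (G : SimpleGraph V) : Set (Set V) :=
  {S | IsPendantBlock G S}

/-- A block is of type `P` (for `P = A` or `P = B`) if all its noncut vertices lie in `P`. -/
def TypeOnly (G : SimpleGraph V) (P : Set V) (S : Set V) : Prop :=
  ∀ v ∈ S, ¬IsCutVertex G v → v ∈ P

/-- A block is type AB if it has a noncut vertex in `A` and a noncut vertex in `B`. -/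
def TypeAB (G : SimpleGraph V) (A B : Set V) (S : Set V) : Prop :=
  (∃ v ∈ S, ¬IsCutVertex G v ∧ v ∈ A) ∧ (∃ v ∈ S, ¬IsCutVertex G v ∧ v ∈ B)

/-- A legal pair: two distinct pendant blocks, not both of type A and not both of type B. -/
def LegalPair (G : SimpleGraph V) (A B : Set V) (S T : Set V) : Prop :=
  IsPendantBlock G S ∧ IsPendantBlock G T ∧ S ≠ T ∧
  ¬(TypeOnly G A S ∧ TypeOnly G A T) ∧ ¬(TypeOnly G B S ∧ TypeOnly G B T)

/-- A legal edge: a vertex pair in `A × B` that is not an edge of `G`. -/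
def LegalEdge (G : SimpleGraph V) (A B : Set V) (a b : V) : Prop :=
  a ∈ A ∧ b ∈ B ∧ ¬G.Adj a b

/-- A binding edge for a legal pair: a legal edge joining two noncut vertices,
one from each block of the pair. -/
def BindingEdge (G : SimpleGraph V) (A B : Set V) (S T : Set V) (a b : V) : Prop :=
  LegalEdge G A B a b ∧
  ((a ∈ S ∧ ¬IsCutVertex G a ∧ b ∈ T ∧ ¬IsCutVertex G b) ∨
   (a ∈ T ∧ ¬IsCutVertex G a ∧ b ∈ S ∧ ¬IsCutVertex G b))

/-- A legal matching of a set `Λ'` of pendant blocks: a set of legal pairs between elements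
of `Λ'` such that each element of `Λ'` belongs to at most one pair. -/
def IsLegalMatching (G : SimpleGraph V) (A B : Set V) (Λ' : Set (Set V))
    (N : Set (Set V × Set V)) : Prop :=
  (∀ q ∈ N, q.1 ∈ Λ' ∧ q.2 ∈ Λ' ∧ LegalPair G A B q.1 q.2) ∧
  (∀ q ∈ N, ∀ q' ∈ N, q ≠ q' →
    ({q.1, q.2} ∩ {q'.1, q'.2} : Set (Set V)) = ∅)

/-- M(Λ'): the maximum cardinality of a legal matching of `Λ'`. -/
def maxMatching (G : SimpleGraph V) (A B : Set V) (Λ' : Set (Set V)) : ℕ :=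
  sSup {k | ∃ N, IsLegalMatching G A B Λ' N ∧ N.ncard = k}

/-- R(Λ') = |Λ'| − 2·M(Λ'). -/
def Rnum (G : SimpleGraph V) (A B : Set V) (Λ' : Set (Set V)) : ℕ :=
  Λ'.ncard - 2 * maxMatching G A B Λ'

/-- A graph is componentwise biconnected if every connected component is a block. -/
def ComponentwiseBiconnected (G : SimpleGraph V) : Prop :=
  ∀ c : G.ConnectedComponent, IsBlock G c.supp

/-- D(G,u): the number of connected components of X − {u}, where X is the
connected component of G containing u. -/
def Dnum (G : SimpleGraph V) (u : V) : ℕ :=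
  Nat.card ((G.induce {v | G.Reachable u v ∧ v ≠ u}).ConnectedComponent)

/-- C(G): the number of connected components of G that are not blocks. -/
def Cnum (G : SimpleGraph V) : ℕ :=
  Nat.card {c : G.ConnectedComponent // ¬IsBlock G c.supp}

/-- η(G) = max{ max_u D(G,u) + C(G) − 2, M(Λ(G)) + R(Λ(G)) }. -/
def eta (G : SimpleGraph V) (A B : Set V) : ℕ :=
  max ((⨆ u : V, Dnum G u) + Cnum G - 2)
      (maxMatching G A B (pendantBlocks G) + Rnum G A B (pendantBlocks G))

/-- A biconnector: a set of legal edges whose addition makes `G` componentwise biconnected. -/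
def IsBiconnector (G : SimpleGraph V) (A B : Set V) (L : Set (Sym2 V)) : Prop :=
  (∀ e ∈ L, ∃ a b : V, e = s(a, b) ∧ LegalEdge G A B a b) ∧
  ComponentwiseBiconnected (G ⊔ SimpleGraph.fromEdgeSet L)

/-- B(G): the minimum number of edges of a biconnector of `G`. -/
def Bnum (G : SimpleGraph V) (A B : Set V) : ℕ :=
  sInf {k | ∃ L, IsBiconnector G A B L ∧ L.ncard = k}

/-- A connected component is an isolated edge. -/
def IsIsolatedEdgeComp (G : SimpleGraph V) (c : G.ConnectedComponent) : Prop :=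
  ∃ u v : V, G.Adj u v ∧ c.supp = {u, v}

/-- C1(G): the number of components that are neither isolated edges nor blocks. -/
def C1num (G : SimpleGraph V) : ℕ :=
  Nat.card {c : G.ConnectedComponent // ¬IsIsolatedEdgeComp G c ∧ ¬IsBlock G c.supp}

/-- C2(G): the number of isolated-edge components. -/
def C2num (G : SimpleGraph V) : ℕ :=
  Nat.card {c : G.ConnectedComponent // IsIsolatedEdgeComp G c}

/-- C3(G): the number of components that are nonsingular blocks. -/
def C3num (G : SimpleGraph V) : ℕ :=
  Nat.card {c : G.ConnectedComponent // IsBlock G c.supp ∧ 1 < c.supp.ncard}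

/-- A cut vertex `u` is critical if D(G,u) − 1 = M(Λ(G)) + R(Λ(G)). -/
def Critical (G : SimpleGraph V) (A B : Set V) (u : V) : Prop :=
  IsCutVertex G u ∧
    Dnum G u - 1 = maxMatching G A B (pendantBlocks G) + Rnum G A B (pendantBlocks G)

/-- A cut vertex `u` is massive if D(G,u) − 1 > M(Λ(G)) + R(Λ(G)). -/
def Massive (G : SimpleGraph V) (A B : Set V) (u : V) : Prop :=
  IsCutVertex G u ∧
    maxMatching G A B (pendantBlocks G) + Rnum G A B (pendantBlocks G) < Dnum G u - 1

/-- Vertices of the block tree: blocks (b-vertices), cut vertices and cut edges (c-vertices). -/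
inductive BTV (V : Type*) where
  | blk : Set V → BTV V
  | cv : V → BTV V
  | ce : Sym2 V → BTV V

/-- Valid vertices of the block tree of `G`: nonsingular blocks and singular pendant blocks
(b-vertices), together with cut vertices and cut edges (c-vertices). -/
def IsBTVert (G : SimpleGraph V) : BTV V → Prop
  | .blk S => IsBlock G S ∧ (1 < S.ncard ∨ ∃ v, S = {v} ∧ (G.neighborSet v).ncard = 1)
  | .cv v => IsCutVertex G v
  | .ce e => IsCutEdge G e

/-- Adjacency of the block tree: a nonsingular block is joined to each cut vertex in it,
a cut vertex to each cut edge incident to it, and a cut edge to each singular (pendant)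
block containing one of its endpoints. -/
def btAdj (G : SimpleGraph V) : BTV V → BTV V → Prop
  | .blk _, .blk _ => False
  | .blk S, .cv c => 1 < S.ncard ∧ c ∈ S
  | .blk S, .ce e => ∃ v, S = {v} ∧ v ∈ e
  | .cv c, .blk S => 1 < S.ncard ∧ c ∈ S
  | .cv _, .cv _ => False
  | .cv c, .ce e => c ∈ e
  | .ce e, .blk S => ∃ v, S = {v} ∧ v ∈ e
  | .ce e, .cv c => c ∈ e
  | .ce _, .ce _ => False

/-- The vertex type of the block tree Ψ(G). -/
abbrev BTVert (G : SimpleGraph V) := {x : BTV V // IsBTVert G x}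

/-- The block tree Ψ(G). -/
def blockTree (G : SimpleGraph V) : SimpleGraph (BTVert G) where
  Adj x y := btAdj G x.1 y.1
  symm := ⟨by
    rintro ⟨x, hx⟩ ⟨y, hy⟩ h
    cases x <;> cases y <;> simp_all [btAdj]⟩
  loopless := ⟨by
    rintro ⟨x, hx⟩ h
    cases x <;> simp_all [btAdj]⟩

/-- Degree of a vertex of the block tree. -/
def btDeg (G : SimpleGraph V) (x : BTVert G) : ℕ :=
  Nat.card ((blockTree G).neighborSet x)

/-- A path is branchless if all its internal vertices have degree two. -/
def Branchless {W : Type*} (T : SimpleGraph W) {x y : W} (p : T.Walk x y) : Prop :=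
  p.IsPath ∧ ∀ z ∈ p.support, z ≠ x → z ≠ y → Nat.card (T.neighborSet z) = 2

/-- A leaf clings to a vertex `v` if there is a branchless path between it and `v`. -/
def Clings {W : Type*} (T : SimpleGraph W) (l v : W) : Prop :=
  ∃ p : T.Walk l v, Branchless T p

/-!
Take a maximum legal matching `N` of `W1 ∪ W2` and any pair `q ∈ N`. If `q` joins `W1` to `W2`,
dropping it is enough. Otherwise, say `q ⊆ W1`, pick `w ∈ W2`. A pendant block has a noncut
vertex, so it is never of type A and of type B at once; hence some block `x` of `q` forms a legal
pair with `w`. If `w` is unmatched, `N \ {q}` avoids `x` and `w`. If `w` is matched to `w'` by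
`r ∈ N`, the four blocks of `q` and `r` can be re-paired crosswise into two legal pairs, one of
them `(x, w)`, and replacing `q, r` by the other one again gives a matching of size `M - 1`
avoiding `x` and `w`. Conversely, adding `(w1, w2)` to a matching of the rest shows that
removing a legal pair lowers `M` by at least one.
-/

section PendantBlocks

variable {G : SimpleGraph V}

lemma reachable_induce_of_subsingleton_neighborSet {v : V}
    (hv : (G.neighborSet v).Subsingleton) {x y : V} (hx : x ≠ v) (hy : y ≠ v)
    (hxy : G.Reachable x y) : (G.induce {z | z ≠ v}).Reachable ⟨x, hx⟩ ⟨y, hy⟩ := by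
  obtain ⟨p, hp⟩ := hxy.exists_isPath
  refine ⟨p.induce {z | z ≠ v} fun z hz hzv => ?_⟩
  subst hzv
  exact hp.isTrail.not_mem_support_of_subsingleton_neighborSet hx.symm hy.symm hv hz

lemma not_isCutVertex_of_ncard_neighborSet_eq_one [Finite V] {v : V}
    (hv : (G.neighborSet v).ncard = 1) : ¬IsCutVertex G v := by
  obtain ⟨a, ha⟩ := Set.ncard_eq_one.mp hv
  rw [IsCutVertex, not_lt]
  refine Nat.card_le_card_of_injective
    (ConnectedComponent.map (Embedding.induce {z | z ≠ v}).toHom) fun c d hcd => ?_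
  induction c using ConnectedComponent.ind with | h x => ?_
  induction d using ConnectedComponent.ind with | h y => ?_
  exact ConnectedComponent.sound <| reachable_induce_of_subsingleton_neighborSet
    (ha ▸ Set.subsingleton_singleton) x.2 y.2 (ConnectedComponent.exact hcd)

lemma IsPendantBlock.exists_not_isCutVertex [Finite V] {S : Set V}
    (hS : IsPendantBlock G S) : ∃ x ∈ S, ¬IsCutVertex G x := by
  rcases hS.2 with ⟨x, rfl, hx⟩ | ⟨hcard, c, -, hc⟩
  · exact ⟨x, rfl, not_isCutVertex_of_ncard_neighborSet_eq_one hx⟩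
  · obtain ⟨x, hxS, hxc⟩ := Set.exists_ne_of_one_lt_ncard hcard c
    exact ⟨x, hxS, fun hcut => hxc (hc x ⟨hxS, hcut⟩)⟩

lemma IsPendantBlock.not_typeOnly_and_typeOnly [Finite V] {A B S : Set V}
    (hAB : Disjoint A B) (hS : IsPendantBlock G S) : ¬(TypeOnly G A S ∧ TypeOnly G B S) := by
  rintro ⟨hA, hB⟩
  obtain ⟨x, hxS, hx⟩ := hS.exists_not_isCutVertex
  exact hAB.notMem_of_mem_left (hA x hxS hx) (hB x hxS hx)

end PendantBlocks

section LegalPairs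

variable {G : SimpleGraph V} {A B : Set V}

lemma LegalPair.symm {S T : Set V} (h : LegalPair G A B S T) : LegalPair G A B T S := by
  unfold LegalPair at *
  tauto

variable [Finite V]

lemma LegalPair.or_legalPair (hAB : Disjoint A B) {S T U : Set V} (h : LegalPair G A B S T)
    (hU : IsPendantBlock G U) (hSU : S ≠ U) (hTU : T ≠ U) :
    LegalPair G A B S U ∨ LegalPair G A B T U := by
  have := hU.not_typeOnly_and_typeOnly hAB
  unfold LegalPair at *
  tauto

lemma LegalPair.or_legalPair_and_legalPair (hAB : Disjoint A B) {S T U W : Set V}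
    (hST : LegalPair G A B S T) (hUW : LegalPair G A B U W)
    (hSU : S ≠ U) (hSW : S ≠ W) (hTU : T ≠ U) (hTW : T ≠ W) :
    (LegalPair G A B S U ∧ LegalPair G A B T W) ∨
      (LegalPair G A B S W ∧ LegalPair G A B T U) := by
  have := hST.1.not_typeOnly_and_typeOnly hAB
  have := hST.2.1.not_typeOnly_and_typeOnly hAB
  have := hUW.1.not_typeOnly_and_typeOnly hAB
  have := hUW.2.1.not_typeOnly_and_typeOnly hAB
  unfold LegalPair at *
  grind

end LegalPairs

section Matchings

variable {G : SimpleGraph V} {A B : Set V} {L : Set (Set V)} {N : Set (Set V × Set V)}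

lemma IsLegalMatching.disjoint (hN : IsLegalMatching G A B L N) {q r : Set V × Set V}
    (hq : q ∈ N) (hr : r ∈ N) (hqr : q ≠ r) : Disjoint ({q.1, q.2} : Set (Set V)) {r.1, r.2} :=
  Set.disjoint_iff_inter_eq_empty.mpr (hN.2 q hq r hr hqr)

lemma IsLegalMatching.pair_subset (hN : IsLegalMatching G A B L N) {q : Set V × Set V}
    (hq : q ∈ N) : ({q.1, q.2} : Set (Set V)) ⊆ L :=
  Set.pair_subset (hN.1 q hq).1 (hN.1 q hq).2.1

lemma IsLegalMatching.mono (hN : IsLegalMatching G A B L N) {L' : Set (Set V)} (h : L ⊆ L') :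
    IsLegalMatching G A B L' N :=
  ⟨fun q hq => ⟨h (hN.1 q hq).1, h (hN.1 q hq).2.1, (hN.1 q hq).2.2⟩, hN.2⟩

lemma IsLegalMatching.subset (hN : IsLegalMatching G A B L N) {N' : Set (Set V × Set V)}
    (h : N' ⊆ N) : IsLegalMatching G A B L N' :=
  ⟨fun q hq => hN.1 q (h hq), fun q hq r hr => hN.2 q (h hq) r (h hr)⟩

lemma IsLegalMatching.diff (hN : IsLegalMatching G A B L N) {P : Set (Set V)}
    (hP : ∀ q ∈ N, Disjoint ({q.1, q.2} : Set (Set V)) P) : IsLegalMatching G A B (L \ P) N := by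
  refine ⟨fun q hq => ⟨⟨(hN.1 q hq).1, ?_⟩, ⟨(hN.1 q hq).2.1, ?_⟩, (hN.1 q hq).2.2⟩, hN.2⟩
  · exact Set.disjoint_left.mp (hP q hq) (by simp)
  · exact Set.disjoint_left.mp (hP q hq) (by simp)

lemma IsLegalMatching.insert (hN : IsLegalMatching G A B L N) {p : Set V × Set V}
    (hp1 : p.1 ∈ L) (hp2 : p.2 ∈ L) (hp : LegalPair G A B p.1 p.2)
    (hfresh : ∀ q ∈ N, Disjoint ({p.1, p.2} : Set (Set V)) {q.1, q.2}) :
    IsLegalMatching G A B L (insert p N) := by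
  refine ⟨?_, ?_⟩
  · rintro q (rfl | hq)
    exacts [⟨hp1, hp2, hp⟩, hN.1 q hq]
  · rintro q (rfl | hq) r (rfl | hr) hqr
    · exact absurd rfl hqr
    · exact Set.disjoint_iff_inter_eq_empty.mp (hfresh r hr)
    · exact Set.disjoint_iff_inter_eq_empty.mp (hfresh q hq).symm
    · exact hN.2 q hq r hr hqr

variable [Finite V]

lemma bddAbove_ncard_isLegalMatching :
    BddAbove {k | ∃ N, IsLegalMatching G A B L N ∧ N.ncard = k} := by
  refine ⟨Nat.card (Set V × Set V), ?_⟩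
  rintro k ⟨N, -, rfl⟩
  exact Set.ncard_le_card N

lemma IsLegalMatching.ncard_le_maxMatching (hN : IsLegalMatching G A B L N) :
    N.ncard ≤ maxMatching G A B L :=
  le_csSup bddAbove_ncard_isLegalMatching ⟨N, hN, rfl⟩

lemma exists_isLegalMatching_ncard_eq_maxMatching (G : SimpleGraph V) (A B : Set V)
    (L : Set (Set V)) : ∃ N, IsLegalMatching G A B L N ∧ N.ncard = maxMatching G A B L := by
  refine Nat.sSup_mem ?_ bddAbove_ncard_isLegalMatching
  exact ⟨0, ∅, ⟨by simp, by simp⟩, Set.ncard_empty _⟩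

lemma maxMatching_diff_pair_add_one_le {S T : Set V} (hS : S ∈ L) (hT : T ∈ L)
    (hST : LegalPair G A B S T) : maxMatching G A B (L \ {S, T}) + 1 ≤ maxMatching G A B L := by
  obtain ⟨N, hN, hcard⟩ := exists_isLegalMatching_ncard_eq_maxMatching G A B (L \ {S, T})
  have hfresh (q) (hq : q ∈ N) : Disjoint ({S, T} : Set (Set V)) {q.1, q.2} :=
    Set.disjoint_right.mpr fun _ hz => (hN.pair_subset hq hz).2
  have hnotMem : (S, T) ∉ N := fun h => (hN.1 _ h).1.2 (Set.mem_insert S _)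
  have hins := (hN.mono Set.sdiff_subset).insert (p := (S, T)) hS hT hST hfresh
  have := hins.ncard_le_maxMatching
  rw [Set.ncard_insert_of_notMem hnotMem] at this
  omega

lemma IsLegalMatching.ncard_le_maxMatching_diff_add_one (hN : IsLegalMatching G A B L N)
    {q : Set V × Set V} (hq : q ∈ N) {P : Set (Set V)}
    (hP : ∀ s ∈ N, s ≠ q → Disjoint ({s.1, s.2} : Set (Set V)) P) :
    N.ncard ≤ maxMatching G A B (L \ P) + 1 := by
  have h := ((hN.subset (N' := N \ {q}) Set.sdiff_subset).diff
    fun s hs => hP s hs.1 hs.2).ncard_le_maxMatching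
  have := Set.ncard_sdiff_singleton_add_one hq
  omega

lemma IsLegalMatching.ncard_le_maxMatching_diff_add_one_of_exchange
    (hN : IsLegalMatching G A B L N) {q r : Set V × Set V} (hq : q ∈ N) (hr : r ∈ N)
    (hqr : q ≠ r) {x y w w' : Set V} (hx : x ∈ ({q.1, q.2} : Set (Set V)))
    (hy : y ∈ ({q.1, q.2} : Set (Set V))) (hxy : x ≠ y) (hw : w ∈ ({r.1, r.2} : Set (Set V)))
    (hw' : w' ∈ ({r.1, r.2} : Set (Set V))) (hww' : w ≠ w') (hyw' : LegalPair G A B y w') :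
    N.ncard ≤ maxMatching G A B (L \ {x, w}) + 1 := by
  have hqr' := hN.disjoint hq hr hqr
  have hrest (s) (hs : s ∈ N \ {q, r}) : Disjoint ({s.1, s.2} : Set (Set V)) {q.1, q.2} ∧
      Disjoint ({s.1, s.2} : Set (Set V)) {r.1, r.2} := by
    simp only [Set.mem_sdiff, Set.mem_insert_iff, Set.mem_singleton_iff, not_or] at hs
    exact ⟨hN.disjoint hs.1 hq hs.2.1, hN.disjoint hs.1 hr hs.2.2⟩
  have hfresh (s) (hs : s ∈ N \ {q, r}) : Disjoint ({y, w'} : Set (Set V)) {s.1, s.2} := by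
    simp only [Set.disjoint_insert_left, Set.disjoint_singleton_left]
    exact ⟨Set.disjoint_right.mp (hrest s hs).1 hy, Set.disjoint_right.mp (hrest s hs).2 hw'⟩
  have hrest' : IsLegalMatching G A B (L \ {x, w}) (N \ {q, r}) := by
    refine (hN.subset Set.sdiff_subset).diff fun s hs => ?_
    simp only [Set.disjoint_insert_right, Set.disjoint_singleton_right]
    exact ⟨Set.disjoint_right.mp (hrest s hs).1 hx, Set.disjoint_right.mp (hrest s hs).2 hw⟩
  have hnew := hrest'.insert (p := (y, w'))
    ⟨hN.pair_subset hq hy, by simpa [hxy.symm] using hqr'.ne_of_mem hy hw⟩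
    ⟨hN.pair_subset hr hw', by simpa [hww'.symm] using (hqr'.ne_of_mem hx hw').symm⟩ hyw' hfresh
  have hnotMem : (y, w') ∉ N \ {q, r} := fun h =>
    Set.disjoint_left.mp (hfresh _ h) (Set.mem_insert y _) (Set.mem_insert y _)
  have h := hnew.ncard_le_maxMatching
  rw [Set.ncard_insert_of_notMem hnotMem, Set.ncard_sdiff (Set.pair_subset hq hr),
    Set.ncard_pair hqr] at h
  have : 2 ≤ N.ncard := Set.ncard_pair hqr ▸ Set.ncard_le_ncard (Set.pair_subset hq hr)
  omega

end Matchings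

section Exchange

variable [Finite V] {G : SimpleGraph V} {A B : Set V} {L : Set (Set V)}
  {N : Set (Set V × Set V)}

lemma IsLegalMatching.exists_legalPair_ncard_le (hAB : Disjoint A B)
    (hL : L ⊆ pendantBlocks G) (hN : IsLegalMatching G A B L N) {q : Set V × Set V}
    (hq : q ∈ N) {w : Set V} (hw : w ∈ L) (hwq : w ∉ ({q.1, q.2} : Set (Set V))) :
    ∃ x ∈ ({q.1, q.2} : Set (Set V)), LegalPair G A B x w ∧
      N.ncard ≤ maxMatching G A B (L \ {x, w}) + 1 := by
  have hlq := (hN.1 q hq).2.2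
  by_cases hmatched : ∃ r ∈ N, w ∈ ({r.1, r.2} : Set (Set V))
  · obtain ⟨r, hr, hwr⟩ := hmatched
    have hqr : q ≠ r := by rintro rfl; exact hwq hwr
    obtain ⟨w', hw', hww'⟩ : ∃ w' ∈ ({r.1, r.2} : Set (Set V)), LegalPair G A B w w' := by
      obtain rfl | rfl := hwr
      exacts [⟨r.2, by simp, (hN.1 r hr).2.2⟩, ⟨r.1, by simp, (hN.1 r hr).2.2.symm⟩]
    have hne {a b : Set V} (ha : a ∈ ({q.1, q.2} : Set (Set V)))
        (hb : b ∈ ({r.1, r.2} : Set (Set V))) : a ≠ b :=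
      (hN.disjoint hq hr hqr).ne_of_mem ha hb
    obtain ⟨x, y, hx, hy, hxy, hxw, hyw'⟩ : ∃ x y, x ∈ ({q.1, q.2} : Set (Set V)) ∧
        y ∈ ({q.1, q.2} : Set (Set V)) ∧ x ≠ y ∧ LegalPair G A B x w ∧
        LegalPair G A B y w' := by
      rcases hlq.or_legalPair_and_legalPair hAB hww' (hne (by simp) hwr) (hne (by simp) hw')
        (hne (by simp) hwr) (hne (by simp) hw') with ⟨h1, h2⟩ | ⟨h1, h2⟩
      exacts [⟨q.1, q.2, by simp, by simp, hlq.2.2.1, h1, h2⟩,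
        ⟨q.2, q.1, by simp, by simp, hlq.2.2.1.symm, h2, h1⟩]
    exact ⟨x, hx, hxw, hN.ncard_le_maxMatching_diff_add_one_of_exchange hq hr hqr hx hy hxy
      hwr hw' hww'.2.2.1 hyw'⟩
  · push Not at hmatched
    obtain ⟨x, hx, hxw⟩ : ∃ x ∈ ({q.1, q.2} : Set (Set V)), LegalPair G A B x w := by
      rcases hlq.or_legalPair hAB (hL hw) (fun h => hwq (h ▸ Or.inl rfl))
        (fun h => hwq (h ▸ Or.inr rfl)) with h | h
      exacts [⟨q.1, by simp, h⟩, ⟨q.2, by simp, h⟩]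
    refine ⟨x, hx, hxw, hN.ncard_le_maxMatching_diff_add_one hq fun s hs hsq => ?_⟩
    simp only [Set.disjoint_insert_right, Set.disjoint_singleton_right]
    exact ⟨Set.disjoint_right.mp (hN.disjoint hs hq hsq) hx, hmatched s hs⟩

lemma exists_legalPair_ncard_le_of_fst_mem (hAB : Disjoint A B) {W1 W2 : Set (Set V)}
    (hW1 : W1 ⊆ pendantBlocks G) (hW2 : W2 ⊆ pendantBlocks G) (hW : Disjoint W1 W2)
    (hW2ne : W2.Nonempty) (hN : IsLegalMatching G A B (W1 ∪ W2) N) {q : Set V × Set V}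
    (hq : q ∈ N) (hq1 : q.1 ∈ W1) :
    ∃ w1 ∈ W1, ∃ w2 ∈ W2, LegalPair G A B w1 w2 ∧
      N.ncard ≤ maxMatching G A B ((W1 ∪ W2) \ {w1, w2}) + 1 := by
  rcases (hN.1 q hq).2.1 with hq2 | hq2
  · obtain ⟨w, hw⟩ := hW2ne
    have hwq : w ∉ ({q.1, q.2} : Set (Set V)) := by
      rintro (rfl | rfl)
      exacts [hW.notMem_of_mem_left hq1 hw, hW.notMem_of_mem_left hq2 hw]
    obtain ⟨x, hx, hxw, hcard⟩ :=
      hN.exists_legalPair_ncard_le hAB (Set.union_subset hW1 hW2) hq (Or.inr hw) hwq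
    exact ⟨x, by rcases hx with rfl | rfl <;> assumption, w, hw, hxw, hcard⟩
  · exact ⟨q.1, hq1, q.2, hq2, (hN.1 q hq).2.2,
      hN.ncard_le_maxMatching_diff_add_one hq fun s hs hsq => hN.disjoint hs hq hsq⟩

end Exchange

theorem stmt_2_general [Fintype V] (G : SimpleGraph V) (A B : Set V)
    (hdisj : Disjoint A B)
    (W1 W2 : Set (Set V))
    (hW1 : W1 ⊆ pendantBlocks G) (hW2 : W2 ⊆ pendantBlocks G)
    (hWdisj : Disjoint W1 W2) (hW1ne : W1.Nonempty) (hW2ne : W2.Nonempty)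
    (hM : 0 < maxMatching G A B (W1 ∪ W2)) :
    ∃ w1 ∈ W1, ∃ w2 ∈ W2, LegalPair G A B w1 w2 ∧
      maxMatching G A B ((W1 ∪ W2) \ {w1, w2}) = maxMatching G A B (W1 ∪ W2) - 1 := by
  obtain ⟨N, hN, hNcard⟩ := exists_isLegalMatching_ncard_eq_maxMatching G A B (W1 ∪ W2)
  obtain ⟨q, hq⟩ : N.Nonempty := Set.nonempty_of_ncard_ne_zero (by omega)
  obtain ⟨w1, hw1, w2, hw2, hw12, hcard⟩ : ∃ w1 ∈ W1, ∃ w2 ∈ W2, LegalPair G A B w1 w2 ∧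
      N.ncard ≤ maxMatching G A B ((W1 ∪ W2) \ {w1, w2}) + 1 := by
    rcases (hN.1 q hq).1 with hq1 | hq1
    · exact exists_legalPair_ncard_le_of_fst_mem hdisj hW1 hW2 hWdisj hW2ne hN hq hq1
    · obtain ⟨w2, hw2, w1, hw1, hw21, hcard⟩ := exists_legalPair_ncard_le_of_fst_mem hdisj
        hW2 hW1 hWdisj.symm hW1ne (Set.union_comm W1 W2 ▸ hN) hq hq1
      exact ⟨w1, hw1, w2, hw2, hw21.symm, by rwa [Set.union_comm, Set.pair_comm] at hcard⟩
  have := maxMatching_diff_pair_add_one_le (L := W1 ∪ W2) (Or.inl hw1) (Or.inr hw2) hw12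
  exact ⟨w1, hw1, w2, hw2, hw12, by omega⟩

theorem stmt_2 [Fintype V] (G : SimpleGraph V) (A B : Set V)
    (hdisj : Disjoint A B) (hcov : A ∪ B = Set.univ)
    (hbip : ∀ u v : V, G.Adj u v → (u ∈ A ∧ v ∈ B) ∨ (u ∈ B ∧ v ∈ A))
    (W1 W2 : Set (Set V))
    (hW1 : W1 ⊆ pendantBlocks G) (hW2 : W2 ⊆ pendantBlocks G)
    (hWdisj : Disjoint W1 W2) (hW1ne : W1.Nonempty) (hW2ne : W2.Nonempty)
    (hM : 0 < maxMatching G A B (W1 ∪ W2)) :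
    ∃ w1 ∈ W1, ∃ w2 ∈ W2, LegalPair G A B w1 w2 ∧
      maxMatching G A B ((W1 ∪ W2) \ {w1, w2}) = maxMatching G A B (W1 ∪ W2) - 1 :=
  stmt_2_general G A B hdisj W1 W2 hW1 hW2 hWdisj hW1ne hW2ne hM

end
end AugBic
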